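/- arXiv:cs/0606071 — 3 statements merged into one kernel-verified Lean document; each statement's English description precedes it below -/
import Mathlib

section
/- For every integer K ≥ 1 and every p ∈ (0,1), the identity ∑_{n=1}^{K} C(K,n) (1/n) p^n (1-p)^{K-n} = ∑_{n=1}^{K} (1/n) (1-p)^{K-n} − (1-p)^K ∑_{n=1}^{K} (1/n) holds. -/
open Finset

lemma binom_aux (K : ℕ) (p q : ℝ) (hpq : p + q = 1) :
    ∑ m ∈ range (K+1), ((K+1).choose (m+1) : ℝ) * p^(m+1) * q^(K-m) = 1 - q^(K+1) := by
  have h := add_pow p q (K+1)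
  rw [hpq, one_pow, Finset.sum_range_succ'] at h
  have h0 : p ^ 0 * q ^ (K + 1 - 0) * ((K+1).choose 0 : ℝ) = q ^ (K+1) := by simp
  rw [h0] at h
  have h1 : ∑ m ∈ range (K+1), p ^ (m+1) * q ^ (K + 1 - (m+1)) * ((K+1).choose (m+1) : ℝ)
      = ∑ m ∈ range (K+1), ((K+1).choose (m+1) : ℝ) * p^(m+1) * q^(K-m) := by
    apply Finset.sum_congr rfl
    intro m _
    rw [Nat.succ_sub_succ]
    ring
  rw [h1] at h
  linarith

lemma key (p : ℝ) : ∀ K : ℕ,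
    ∑ m ∈ range K, ((K.choose (m+1)) : ℝ) * (1/(m+1)) * p^(m+1) * (1-p)^(K-(m+1))
      = ∑ m ∈ range K, (1/(m+1) : ℝ) * ((1-p)^(K-(m+1)) - (1-p)^K) := by
  intro K
  induction K with
  | zero => simp
  | succ K ih =>
    set q : ℝ := 1 - p with hq
    have hpq : p + q = 1 := by rw [hq]; ring
    -- Pascal split of LHS
    have lhs_split :
        ∑ m ∈ range (K+1), (((K+1).choose (m+1)) : ℝ) * (1/(m+1)) * p^(m+1) * q^((K+1)-(m+1))
        = (∑ m ∈ range (K+1), ((K.choose m) : ℝ) * (1/(m+1)) * p^(m+1) * q^(K-m))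
          + ∑ m ∈ range (K+1), ((K.choose (m+1)) : ℝ) * (1/(m+1)) * p^(m+1) * q^(K-m) := by
      rw [← Finset.sum_add_distrib]
      apply Finset.sum_congr rfl
      intro m _
      have hp2 : (((K+1).choose (m+1)) : ℝ) = (K.choose m : ℝ) + (K.choose (m+1) : ℝ) := by
        exact_mod_cast Nat.choose_succ_succ K m
      rw [Nat.succ_sub_succ, hp2]
      ring
    -- A term
    have hA : ∑ m ∈ range (K+1), ((K.choose m) : ℝ) * (1/(m+1)) * p^(m+1) * q^(K-m)
        = (1/(K+1)) * (1 - q^(K+1)) := by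
      have : ∑ m ∈ range (K+1), ((K.choose m) : ℝ) * (1/(m+1)) * p^(m+1) * q^(K-m)
          = ∑ m ∈ range (K+1), (1/(K+1) : ℝ) * ((((K+1).choose (m+1)) : ℝ) * p^(m+1) * q^(K-m)) := by
        apply Finset.sum_congr rfl
        intro m _
        have hmul : ((K:ℝ)+1) * (K.choose m : ℝ) = (((K+1).choose (m+1)) : ℝ) * ((m:ℝ)+1) := by
          exact_mod_cast congrArg (Nat.cast : ℕ → ℝ) (Nat.add_one_mul_choose_eq K m)
        have hm1 : ((m:ℝ)+1) ≠ 0 := by positivity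
        have hK1 : ((K:ℝ)+1) ≠ 0 := by positivity
        have h2 : (K.choose m : ℝ) / ((m:ℝ)+1) = (((K+1).choose (m+1)) : ℝ) / ((K:ℝ)+1) := by
          rw [div_eq_div_iff hm1 hK1]
          linarith [hmul]
        calc ((K.choose m) : ℝ) * (1/(m+1)) * p^(m+1) * q^(K-m)
            = ((K.choose m : ℝ) / ((m:ℝ)+1)) * (p^(m+1) * q^(K-m)) := by ring
          _ = ((((K+1).choose (m+1)) : ℝ) / ((K:ℝ)+1)) * (p^(m+1) * q^(K-m)) := by rw [h2]
          _ = (1/(K+1) : ℝ) * ((((K+1).choose (m+1)) : ℝ) * p^(m+1) * q^(K-m)) := by ring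
      rw [this, ← Finset.mul_sum, binom_aux K p q hpq]
    -- B term
    have hB : ∑ m ∈ range (K+1), ((K.choose (m+1)) : ℝ) * (1/(m+1)) * p^(m+1) * q^(K-m)
        = q * ∑ m ∈ range K, ((K.choose (m+1)) : ℝ) * (1/(m+1)) * p^(m+1) * q^(K-(m+1)) := by
      rw [Finset.sum_range_succ]
      have hz : (K.choose (K+1) : ℝ) = 0 := by
        simp [Nat.choose_eq_zero_of_lt]
      rw [hz, Finset.mul_sum]
      simp only [zero_mul, add_zero]
      apply Finset.sum_congr rfl
      intro m hm
      have hmK : m < K := Finset.mem_range.mp hm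
      have hexp : K - m = (K - (m+1)) + 1 := by omega
      rw [hexp, pow_succ]
      ring
    -- RHS split
    have rhs_split :
        ∑ m ∈ range (K+1), (1/(m+1) : ℝ) * (q^((K+1)-(m+1)) - q^(K+1))
        = q * (∑ m ∈ range K, (1/(m+1) : ℝ) * (q^(K-(m+1)) - q^K))
          + (1/(K+1)) * (1 - q^(K+1)) := by
      rw [Finset.sum_range_succ, Finset.mul_sum]
      have hsum : ∀ m ∈ range K, (1/(m+1) : ℝ) * (q^((K+1)-(m+1)) - q^(K+1))
          = q * ((1/(m+1) : ℝ) * (q^(K-(m+1)) - q^K)) := by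
        intro m hm
        have hmK : m < K := Finset.mem_range.mp hm
        have h1 : (K+1) - (m+1) = (K - (m+1)) + 1 := by omega
        rw [h1, pow_succ, show K + 1 = K.succ from rfl, pow_succ]
        ring
      rw [Finset.sum_congr rfl hsum]
      congr 1
      simp
    rw [lhs_split, hA, hB, ih, rhs_split]
    push_cast
    ring

/-- For every integer `K ≥ 1` and every `p ∈ (0,1)`:
`∑_{n=1}^K C(K,n) (1/n) p^n (1-p)^(K-n)
  = ∑_{n=1}^K (1/n) (1-p)^(K-n) − (1-p)^K ∑_{n=1}^K (1/n)`. -/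
theorem stmt3 (K : ℕ) (hK : 1 ≤ K) (p : ℝ) (hp : p ∈ Set.Ioo (0:ℝ) 1) :
    ∑ n ∈ Finset.Icc 1 K, (K.choose n : ℝ) * (1 / n) * p ^ n * (1 - p) ^ (K - n)
      = ∑ n ∈ Finset.Icc 1 K, (1 / n : ℝ) * (1 - p) ^ (K - n)
        - (1 - p) ^ K * ∑ n ∈ Finset.Icc 1 K, (1 / n : ℝ) := by
  have hre : ∀ f : ℕ → ℝ, ∑ n ∈ Finset.Icc 1 K, f n = ∑ m ∈ range K, f (m+1) := by
    intro f
    rw [← Finset.Ico_add_one_right_eq_Icc, Finset.sum_Ico_eq_sum_range]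
    simp [add_comm]
  rw [hre, hre, hre, Finset.mul_sum, ← Finset.sum_sub_distrib]
  push_cast
  rw [key p K]
  apply Finset.sum_congr rfl
  intro m _
  ring
end

section
/- Define λ(K) = ∑_{n=1}^{K} C(K,n) (1/n) p^n (1-p)^{K-n} for p ∈ (0,1). Then λ satisfies the recursion λ(K) = (1-p) λ(K-1) + 1/K − (1-p)^K / K for all K ≥ 2, with λ(1) = p. -/
/-- Define `λ(K) = ∑_{n=1}^K C(K,n) (1/n) p^n (1-p)^(K-n)` for `p ∈ (0,1)`.
Then `λ(1) = p` and `λ(K) = (1-p) λ(K-1) + 1/K − (1-p)^K / K` for all `K ≥ 2`. -/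
theorem stmt4 (p : ℝ) (hp : p ∈ Set.Ioo (0:ℝ) 1) (lam : ℕ → ℝ)
    (hlam : ∀ K : ℕ, lam K
      = ∑ n ∈ Finset.Icc 1 K, (K.choose n : ℝ) * (1 / n) * p ^ n * (1 - p) ^ (K - n)) :
    lam 1 = p ∧
    ∀ K : ℕ, 2 ≤ K → lam K = (1 - p) * lam (K - 1) + 1 / K - (1 - p) ^ K / K := by
  constructor
  · rw [hlam]; simp
  · intro K hK
    obtain ⟨M, rfl⟩ : ∃ M, K = M + 1 := ⟨K - 1, by omega⟩
    simp only [Nat.add_sub_cancel]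
    have hM1 : ((M : ℝ) + 1) ≠ 0 := by positivity
    rw [hlam, hlam]
    -- binomial theorem
    have hbin : ∑ n ∈ Finset.range (M + 2),
        p ^ n * (1 - p) ^ (M + 1 - n) * ((M+1).choose n : ℝ) = 1 := by
      rw [← add_pow]; norm_num
    -- term identity
    have hterm : ∀ n ∈ Finset.Icc 1 (M + 1),
        ((M+1).choose n : ℝ) * (1 / n) * p ^ n * (1 - p) ^ (M + 1 - n)
        = (M.choose n : ℝ) * (1 / n) * p ^ n * (1 - p) ^ (M + 1 - n)
          + (1 / (M + 1 : ℝ)) * (((M+1).choose n : ℝ) * p ^ n * (1 - p) ^ (M + 1 - n)) := by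
      intro n hn
      simp only [Finset.mem_Icc] at hn
      obtain ⟨m, rfl⟩ : ∃ m, n = m + 1 := ⟨n - 1, by omega⟩
      have hpascal : ((M+1).choose (m+1) : ℝ) = (M.choose m : ℝ) + (M.choose (m+1) : ℝ) := by
        rw [← Nat.cast_add, Nat.choose_succ_succ]
      have hkey : ((M:ℝ) + 1) * (M.choose m : ℝ) = ((M+1).choose (m+1) : ℝ) * ((m:ℝ) + 1) := by
        have := Nat.add_one_mul_choose_eq M m
        have : ((Nat.succ M * M.choose m : ℕ) : ℝ) = (((M+1).choose (m+1) * (m+1) : ℕ) : ℝ) := by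
          rw [this]
        push_cast at this
        linarith
      have hm1 : ((m : ℝ) + 1) ≠ 0 := by positivity
      have hdiv : (M.choose m : ℝ) * (1 / ((m:ℝ)+1)) = ((M+1).choose (m+1) : ℝ) * (1 / ((M:ℝ)+1)) := by
        field_simp
        linarith
      push_cast
      rw [hpascal, add_mul, add_mul, add_mul, hdiv, hpascal]
      ring
    rw [Finset.sum_congr rfl hterm, Finset.sum_add_distrib]
    -- first sum
    have h1 : ∑ n ∈ Finset.Icc 1 (M + 1),
        (M.choose n : ℝ) * (1 / n) * p ^ n * (1 - p) ^ (M + 1 - n)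
        = (1 - p) * ∑ n ∈ Finset.Icc 1 M, (M.choose n : ℝ) * (1 / n) * p ^ n * (1 - p) ^ (M - n) := by
      rw [Finset.mul_sum]
      have hins : Finset.Icc 1 (M + 1) = insert (M + 1) (Finset.Icc 1 M) := by
        ext x; simp [Finset.mem_Icc]; omega
      rw [hins, Finset.sum_insert (by simp)]
      rw [Nat.choose_eq_zero_of_lt (by omega)]
      simp only [Nat.cast_zero, zero_mul, zero_add]
      apply Finset.sum_congr rfl
      intro n hn
      simp only [Finset.mem_Icc] at hn
      have : M + 1 - n = (M - n) + 1 := by omega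
      rw [this, pow_succ]
      ring
    -- second sum
    have h2 : ∑ n ∈ Finset.Icc 1 (M + 1),
        (1 / ((M:ℝ) + 1)) * (((M+1).choose n : ℝ) * p ^ n * (1 - p) ^ (M + 1 - n))
        = (1 - (1 - p) ^ (M + 1)) / ((M:ℝ) + 1) := by
      rw [← Finset.mul_sum]
      have hins : Finset.range (M + 2) = insert 0 (Finset.Icc 1 (M + 1)) := by
        ext x; simp [Finset.mem_Icc]; omega
      rw [hins, Finset.sum_insert (by simp)] at hbin
      simp only [pow_zero, one_mul, Nat.choose_zero_right, Nat.cast_one, mul_one,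
        Nat.sub_zero] at hbin
      have hsum : ∑ n ∈ Finset.Icc 1 (M+1), ((M+1).choose n : ℝ) * p ^ n * (1 - p) ^ (M + 1 - n)
          = 1 - (1 - p) ^ (M + 1) := by
        have : ∑ n ∈ Finset.Icc 1 (M+1), p ^ n * (1 - p) ^ (M + 1 - n) * (((M+1).choose n : ℕ) : ℝ)
            = 1 - (1 - p) ^ (M + 1) := by linarith
        rw [← this]
        apply Finset.sum_congr rfl
        intro n _; ring
      rw [hsum]; ring
    rw [h1, h2]
    push_cast
    ring
end

section
/- The function I₀(z) e^{-z} √(2π z) converges to 1 as z → ∞; more precisely, I₀(z) e^{-z} √(2π z) = 1 + O(1/z). -/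
/-!
Since `I₀(z) e^{-z} = (1/π) ∫₀^π e^{-z (1 - cos θ)} dθ`, it suffices to show that this integral is
`√(π/(2z)) + O(z^{-3/2})`. Over `[π/2, π]` the integrand is at most `e^{-z}`. On `[0, π/2]` the
substitution `θ = 2 arcsin s`, under which `1 - cos θ = 2 s²` and `dθ = 2 ds / √(1 - s²)`, gives
`∫₀^{1/√2} 2 e^{-2 z s²} / √(1 - s²) ds`. As `1 ≤ 1 / √(1 - s²) ≤ 1 + 2 s²` there, this differs from
the Gaussian integral `∫₀^∞ 2 e^{-2 z s²} ds = √(π/(2z))` by its exponentially small tail beyond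
`1/√2` and by at most `∫₀^∞ 4 s² e^{-2 z s²} ds = O(z^{-3/2})`.
-/

open Real Filter Asymptotics MeasureTheory Set

section TruncatedGaussian

variable {b c : ℝ}

theorem integral_Ioi_exp_neg_mul_sq_le (hb : 0 < b) (hc : 0 < c) :
    ∫ s in Ioi c, exp (-b * s ^ 2) ≤ exp (-b * c ^ 2) / (b * c) := by
  have hbc : -(b * c) < 0 := neg_neg_of_pos (mul_pos hb hc)
  calc ∫ s in Ioi c, exp (-b * s ^ 2) ≤ ∫ s in Ioi c, exp (-(b * c) * s) := by
        refine setIntegral_mono_on (integrable_exp_neg_mul_sq hb).integrableOn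
          (integrableOn_exp_mul_Ioi hbc c) measurableSet_Ioi fun s hs => exp_le_exp.2 ?_
        nlinarith [mul_nonneg (mul_pos hb (hc.trans hs)).le (sub_nonneg.2 (mem_Ioi.1 hs).le)]
    _ = exp (-b * c ^ 2) / (b * c) := by
        rw [integral_exp_mul_Ioi hbc, neg_div_neg_eq]
        ring_nf

theorem intervalIntegral_exp_neg_mul_sq (hb : 0 < b) (hc : 0 ≤ c) :
    ∫ s in 0..c, exp (-b * s ^ 2) = √(π / b) / 2 - ∫ s in Ioi c, exp (-b * s ^ 2) := by
  rw [← integral_gaussian_Ioi,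
    intervalIntegral.integral_Ioi_sub_Ioi (integrable_exp_neg_mul_sq hb).integrableOn hc]

theorem intervalIntegral_exp_neg_mul_sq_le (hb : 0 < b) (hc : 0 ≤ c) :
    ∫ s in 0..c, exp (-b * s ^ 2) ≤ √(π / b) / 2 := by
  rw [intervalIntegral_exp_neg_mul_sq hb hc, sub_le_self_iff]
  exact setIntegral_nonneg measurableSet_Ioi fun s _ => (exp_pos _).le

theorem le_intervalIntegral_exp_neg_mul_sq (hb : 0 < b) (hc : 0 < c) :
    √(π / b) / 2 - exp (-b * c ^ 2) / (b * c) ≤ ∫ s in 0..c, exp (-b * s ^ 2) := by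
  rw [intervalIntegral_exp_neg_mul_sq hb hc.le]
  linarith [integral_Ioi_exp_neg_mul_sq_le hb hc]

end TruncatedGaussian

theorem sqrt_one_sub_sq_pos {s : ℝ} (hs : s ∈ Ioo (-1 : ℝ) 1) : 0 < √(1 - s ^ 2) :=
  sqrt_pos.2 (by nlinarith [hs.1, hs.2])

theorem one_le_inv_sqrt_one_sub_sq {s : ℝ} (hs : s ∈ Ioo (-1 : ℝ) 1) : 1 ≤ (√(1 - s ^ 2))⁻¹ :=
  one_le_inv₀ (sqrt_one_sub_sq_pos hs) |>.2 (sqrt_le_one.2 (by nlinarith))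

theorem inv_sqrt_one_sub_sq_le {s : ℝ} (hs : s ^ 2 ≤ 1 / 2) : (√(1 - s ^ 2))⁻¹ ≤ 1 + 2 * s ^ 2 := by
  have hpos : 0 < 1 - s ^ 2 := by linarith
  rw [inv_le_iff_one_le_mul₀ (sqrt_pos.2 hpos)]
  nlinarith [sq_sqrt hpos.le, sqrt_nonneg (1 - s ^ 2),
    sq_nonneg ((1 + 2 * s ^ 2) * √(1 - s ^ 2) - 1), sq_nonneg s]

theorem integral_comp_arcsin_div_sqrt {a b : ℝ} (hab : uIcc a b ⊆ Ioo (-1) 1) {g : ℝ → ℝ}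
    (hg : Continuous g) :
    ∫ s in a..b, g (arcsin s) / √(1 - s ^ 2) = ∫ θ in arcsin a..arcsin b, g θ := by
  have h := intervalIntegral.integral_comp_mul_deriv
    (fun s hs => hasDerivAt_arcsin (hab hs).1.ne' (hab hs).2.ne)
    (continuousOn_const.div (by fun_prop) fun s hs => (sqrt_one_sub_sq_pos (hab hs)).ne') hg
  simp_rw [Function.comp_apply, mul_one_div] at h
  exact h

theorem uIcc_zero_sqrt_two_div_two_subset_Ioo : uIcc 0 (√2 / 2) ⊆ Ioo (-1 : ℝ) 1 := by
  rw [uIcc_of_le (by positivity)]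
  exact Icc_subset_Ioo (by norm_num) (by nlinarith [sq_sqrt (zero_le_two : (0:ℝ) ≤ 2)])

theorem integral_zero_pi_div_two_exp_mul_cos_sub_one (z : ℝ) :
    ∫ θ in 0..π / 2, exp (z * (cos θ - 1)) =
      ∫ s in 0..√2 / 2, 2 * exp (-(2 * z) * s ^ 2) / √(1 - s ^ 2) := by
  have harcsin : arcsin (√2 / 2) = π / 4 := by
    rw [← sin_pi_div_four, arcsin_sin (by linarith [pi_pos]) (by linarith [pi_pos])]
  calc ∫ θ in 0..π / 2, exp (z * (cos θ - 1))
      = ∫ θ in 0..π / 4, 2 * exp (z * (cos (2 * θ) - 1)) := by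
        rw [intervalIntegral.integral_const_mul,
          intervalIntegral.integral_comp_mul_left (fun θ => exp (z * (cos θ - 1))) two_ne_zero]
        ring_nf
    _ = ∫ s in 0..√2 / 2, 2 * exp (z * (cos (2 * arcsin s) - 1)) / √(1 - s ^ 2) := by
        have h := integral_comp_arcsin_div_sqrt uIcc_zero_sqrt_two_div_two_subset_Ioo
          (g := fun θ => 2 * exp (z * (cos (2 * θ) - 1))) (by fun_prop)
        simp only [arcsin_zero, harcsin] at h
        exact h.symm
    _ = _ := intervalIntegral.integral_congr fun s hs => by
        have hs' := uIcc_zero_sqrt_two_div_two_subset_Ioo hs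
        rw [cos_two_mul_eq_one_sub, sin_arcsin hs'.1.le hs'.2.le]
        ring_nf

theorem intervalIntegrable_exp_neg_mul_sq_div_sqrt (z : ℝ) :
    IntervalIntegrable (fun s => 2 * exp (-(2 * z) * s ^ 2) / √(1 - s ^ 2)) volume 0 (√2 / 2) :=
  (ContinuousOn.div (by fun_prop) (by fun_prop) fun s hs =>
    (sqrt_one_sub_sq_pos (uIcc_zero_sqrt_two_div_two_subset_Ioo hs)).ne').intervalIntegrable

theorem four_mul_sq_mul_exp_neg_le {z : ℝ} (hz : 0 < z) (s : ℝ) :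
    4 * s ^ 2 * exp (-(2 * z) * s ^ 2) ≤ 2 / z * exp (-z * s ^ 2) := by
  have ht : 2 * (z * s ^ 2) ≤ exp (z * s ^ 2) := by
    nlinarith [quadratic_le_exp_of_nonneg (by positivity : 0 ≤ z * s ^ 2)]
  have hsplit : exp (-(2 * z) * s ^ 2) * exp (z * s ^ 2) = exp (-z * s ^ 2) := by
    rw [← exp_add]; ring_nf
  rw [div_mul_eq_mul_div, le_div_iff₀ hz]
  calc 4 * s ^ 2 * exp (-(2 * z) * s ^ 2) * z
        = 2 * exp (-(2 * z) * s ^ 2) * (2 * (z * s ^ 2)) := by ring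
    _ ≤ 2 * exp (-(2 * z) * s ^ 2) * exp (z * s ^ 2) := by gcongr
    _ = 2 * exp (-z * s ^ 2) := by rw [mul_assoc, hsplit]

theorem integral_pi_div_two_pi_exp_mul_cos_sub_one_le {z : ℝ} (hz : 0 ≤ z) :
    ∫ θ in π / 2..π, exp (z * (cos θ - 1)) ≤ π / 2 * exp (-z) := by
  have h := intervalIntegral.integral_mono_on (by linarith [pi_pos] : π / 2 ≤ π)
    ((by fun_prop : Continuous fun θ => exp (z * (cos θ - 1))).intervalIntegrable _ _)
    (intervalIntegrable_const (μ := volume) (c := exp (-z))) fun θ hθ => exp_le_exp.2 <| by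
      nlinarith [cos_nonpos_of_pi_div_two_le_of_le hθ.1 (by linarith [hθ.2, pi_pos])]
  rw [intervalIntegral.integral_const, smul_eq_mul] at h
  linarith

theorem integral_zero_pi_div_two_exp_mul_cos_sub_one_le {z : ℝ} (hz : 0 < z) :
    ∫ θ in 0..π / 2, exp (z * (cos θ - 1)) ≤ √(π / (2 * z)) + √(π / z) / z := by
  have hc2 : (√2 / 2) ^ 2 = 1 / 2 := by rw [div_pow, sq_sqrt zero_le_two]; norm_num
  have hgauss : Continuous fun s : ℝ => exp (-(2 * z) * s ^ 2) := by fun_prop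
  have hgauss' : Continuous fun s : ℝ => exp (-z * s ^ 2) := by fun_prop
  rw [integral_zero_pi_div_two_exp_mul_cos_sub_one]
  calc ∫ s in 0..√2 / 2, 2 * exp (-(2 * z) * s ^ 2) / √(1 - s ^ 2)
      ≤ ∫ s in 0..√2 / 2, (2 * exp (-(2 * z) * s ^ 2) + 2 / z * exp (-z * s ^ 2)) := by
        refine intervalIntegral.integral_mono_on (by positivity)
          (intervalIntegrable_exp_neg_mul_sq_div_sqrt z)
          ((by fun_prop : Continuous _).intervalIntegrable _ _) fun s hs => ?_
        have hs2 : s ^ 2 ≤ 1 / 2 := by nlinarith [hs.1, hs.2]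
        calc 2 * exp (-(2 * z) * s ^ 2) / √(1 - s ^ 2)
            ≤ 2 * exp (-(2 * z) * s ^ 2) * (1 + 2 * s ^ 2) := by
              rw [div_eq_mul_inv]; gcongr; exact inv_sqrt_one_sub_sq_le hs2
          _ = 2 * exp (-(2 * z) * s ^ 2) + 4 * s ^ 2 * exp (-(2 * z) * s ^ 2) := by ring
          _ ≤ _ := by linarith [four_mul_sq_mul_exp_neg_le hz s]
    _ = 2 * (∫ s in 0..√2 / 2, exp (-(2 * z) * s ^ 2))
          + 2 / z * ∫ s in 0..√2 / 2, exp (-z * s ^ 2) := by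
        rw [intervalIntegral.integral_add ((hgauss.intervalIntegrable _ _).const_mul _)
          ((hgauss'.intervalIntegrable _ _).const_mul _), intervalIntegral.integral_const_mul,
          intervalIntegral.integral_const_mul]
    _ ≤ 2 * (√(π / (2 * z)) / 2) + 2 / z * (√(π / z) / 2) := by
        gcongr
        · exact intervalIntegral_exp_neg_mul_sq_le (by positivity) (by positivity)
        · exact intervalIntegral_exp_neg_mul_sq_le hz (by positivity)
    _ = √(π / (2 * z)) + √(π / z) / z := by ring

theorem le_integral_zero_pi_div_two_exp_mul_cos_sub_one {z : ℝ} (hz : 0 < z) :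
    √(π / (2 * z)) - 2 * exp (-z) / z ≤ ∫ θ in 0..π / 2, exp (z * (cos θ - 1)) := by
  have hc2 : (√2 / 2) ^ 2 = 1 / 2 := by rw [div_pow, sq_sqrt zero_le_two]; norm_num
  have hc : 1 ≤ 2 * (√2 / 2) := by nlinarith [sqrt_nonneg 2]
  have htail : 2 * (exp (-(2 * z) * (√2 / 2) ^ 2) / (2 * z * (√2 / 2))) ≤ 2 * exp (-z) / z := by
    rw [hc2, show -(2 * z) * (1 / 2) = -z by ring, mul_div_assoc]
    gcongr
    nlinarith
  rw [integral_zero_pi_div_two_exp_mul_cos_sub_one]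
  calc √(π / (2 * z)) - 2 * exp (-z) / z
      ≤ 2 * (√(π / (2 * z)) / 2 - exp (-(2 * z) * (√2 / 2) ^ 2) / (2 * z * (√2 / 2))) := by
        linarith
    _ ≤ 2 * ∫ s in 0..√2 / 2, exp (-(2 * z) * s ^ 2) := by
        gcongr
        exact le_intervalIntegral_exp_neg_mul_sq (by positivity) (by positivity)
    _ = ∫ s in 0..√2 / 2, 2 * exp (-(2 * z) * s ^ 2) :=
        (intervalIntegral.integral_const_mul _ _).symm
    _ ≤ ∫ s in 0..√2 / 2, 2 * exp (-(2 * z) * s ^ 2) / √(1 - s ^ 2) := by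
        refine intervalIntegral.integral_mono_on (by positivity)
          ((by fun_prop : Continuous _).intervalIntegrable _ _)
          (intervalIntegrable_exp_neg_mul_sq_div_sqrt z) fun s hs => ?_
        rw [div_eq_mul_inv]
        exact le_mul_of_one_le_right (by positivity) (one_le_inv_sqrt_one_sub_sq
          (uIcc_zero_sqrt_two_div_two_subset_Ioo (Icc_subset_uIcc hs)))

theorem exp_neg_le_two_div_mul_sqrt {z : ℝ} (hz : 1 ≤ z) : exp (-z) ≤ 2 / (z * √z) := by
  have hz0 : 0 < z := by linarith
  have hexp : z ^ 2 / 2 ≤ exp z := by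
    simpa [Nat.factorial] using pow_div_factorial_le_exp _ hz0.le 2
  have hsqrt : z * √z ≤ z * z := by gcongr; exact sqrt_le_self_iff.2 (Or.inr hz)
  rw [exp_neg, le_div_iff₀ (by positivity), inv_mul_le_iff₀ (exp_pos z)]
  nlinarith

theorem isBigO_integral_exp_mul_cos_sub_one_sub_sqrt :
    (fun z => (∫ θ in 0..π, exp (z * (cos θ - 1))) - √(π / (2 * z))) =O[atTop]
      fun z => 1 / (z * √z) := by
  refine IsBigO.of_bound 6 ?_
  filter_upwards [eventually_ge_atTop 1] with z hz
  have hz0 : 0 < z := by linarith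
  have hpos : 0 < 1 / (z * √z) := one_div_pos.2 (mul_pos hz0 (sqrt_pos.2 hz0))
  have hexp : exp (-z) ≤ 2 * (1 / (z * √z)) := by
    rw [mul_one_div]; exact exp_neg_le_two_div_mul_sqrt hz
  have hhead : √(π / z) / z ≤ 2 * (1 / (z * √z)) := by
    rw [sqrt_div pi_pos.le, div_div, mul_comm (√z), mul_one_div]
    gcongr
    rw [sqrt_le_left zero_le_two]
    linarith [pi_le_four]
  have htail : π / 2 * exp (-z) ≤ 4 * (1 / (z * √z)) :=
    calc π / 2 * exp (-z) ≤ 2 * (2 * (1 / (z * √z))) :=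
          mul_le_mul (by linarith [pi_le_four]) hexp (exp_pos _).le zero_le_two
      _ = 4 * (1 / (z * √z)) := by ring
  have htail' : 2 * exp (-z) / z ≤ 2 * exp (-z) := div_le_self (by positivity) hz
  have hsplit : (∫ θ in 0..π / 2, exp (z * (cos θ - 1))) +
      (∫ θ in π / 2..π, exp (z * (cos θ - 1))) = ∫ θ in 0..π, exp (z * (cos θ - 1)) :=
    intervalIntegral.integral_add_adjacent_intervals
    ((by fun_prop : Continuous fun θ => exp (z * (cos θ - 1))).intervalIntegrable 0 (π / 2))
    ((by fun_prop : Continuous fun θ => exp (z * (cos θ - 1))).intervalIntegrable (π / 2) π)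
  have hnonneg : 0 ≤ ∫ θ in π / 2..π, exp (z * (cos θ - 1)) :=
    intervalIntegral.integral_nonneg (by linarith [pi_pos]) fun θ _ => (exp_pos _).le
  have hupper := integral_zero_pi_div_two_exp_mul_cos_sub_one_le hz0
  have hlower := le_integral_zero_pi_div_two_exp_mul_cos_sub_one hz0
  have hend := integral_pi_div_two_pi_exp_mul_cos_sub_one_le hz0.le
  rw [norm_eq_abs, norm_eq_abs, abs_of_pos hpos, abs_le, ← hsplit]
  constructor <;> linarith

theorem mul_exp_neg_mul_sqrt_sub_one_eq {z : ℝ} (hz : 0 < z) :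
    (1 / π * ∫ θ in 0..π, exp (z * cos θ)) * exp (-z) * √(2 * π * z) - 1 =
      ((∫ θ in 0..π, exp (z * (cos θ - 1))) - √(π / (2 * z))) * (√(2 * π) / π * √z) := by
  have hshift : (∫ θ in 0..π, exp (z * cos θ)) * exp (-z) =
      ∫ θ in 0..π, exp (z * (cos θ - 1)) := by
    rw [← intervalIntegral.integral_mul_const]
    congr 1 with θ
    rw [← exp_add]
    ring_nf
  have hG : √(π / (2 * z)) * (√(2 * π) * √z) = π := by
    rw [← sqrt_mul (by positivity), ← sqrt_mul (by positivity),
      show π / (2 * z) * (2 * π * z) = π ^ 2 by field_simp, sqrt_sq pi_pos.le]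
  have hG' : √(π / (2 * z)) * (√(2 * π) / π * √z) = 1 := by
    calc √(π / (2 * z)) * (√(2 * π) / π * √z) = √(π / (2 * z)) * (√(2 * π) * √z) / π := by ring
      _ = 1 := by rw [hG, div_self pi_ne_zero]
  rw [sqrt_mul (by positivity) z, mul_assoc (1 / π), hshift, sub_mul, hG']
  ring

/-- With `I₀(z) = (1/π) ∫_0^π e^{z cos θ} dθ` the modified Bessel function of
order zero, we have `I₀(z) e^{-z} √(2πz) = 1 + O(1/z)` as `z → ∞`. -/
theorem stmt13 :
    (fun z : ℝ =>
        ((1 / π) * ∫ θ in (0:ℝ)..π, Real.exp (z * Real.cos θ)) * Real.exp (-z)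
          * Real.sqrt (2 * π * z) - 1)
      =O[atTop] (fun z : ℝ => 1 / z) := by
  have hsqrt : (fun z : ℝ => √(2 * π) / π * √z) =O[atTop] fun z => √z :=
    (isBigO_refl _ _).const_mul_left _
  refine (isBigO_integral_exp_mul_cos_sub_one_sub_sqrt.mul hsqrt).congr' ?_ ?_
  · filter_upwards [eventually_gt_atTop 0] with z hz
      using (mul_exp_neg_mul_sqrt_sub_one_eq hz).symm
  · filter_upwards [eventually_gt_atTop 0] with z hz
    field_simp
end
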